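/- arXiv:1710.09337 — 5 statements merged into one kernel-verified Lean document; each statement's English description precedes it below -/
import Mathlib

section
/- Let $\mathcal{G}=(G^0,\mathcal{G}^1,r,s)$ be an ultragraph and let $\mathcal{G}^0$ be the smallest subset of the power set of $G^0$ containing all singletons $\{v\}$ for $v\in G^0$, containing $r(e)$ for all $e\in\mathcal{G}^1$, and closed under finite unions and nonempty finite intersections. Then $\mathcal{G}^0 = \{\bigcap_{e\in X_1} r(e)\cup\cdots\cup\bigcap_{e\in X_n} r(e)\cup F : X_1,\ldots,X_n \text{ finite nonempty subsets of } \mathcal{G}^1,\ F \text{ a finite subset of } G^0\}$. -/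
/-- An ultragraph: countable sets of vertices and edges, a source map `s : E → V` and a
range map `r : E → P(V) \ {∅}`. -/
structure Ultragraph (V E : Type*) where
  s : E → V
  r : E → Set V
  r_nonempty : ∀ e, (r e).Nonempty

namespace Ultragraph

variable {V E : Type*}

/-- `G.G0` is the smallest collection of subsets of `V` containing all singletons and all
ranges `r e`, closed under finite unions (including the empty union) and nonempty finite
intersections. -/
inductive G0 (G : Ultragraph V E) : Set V → Prop
  | empty : G0 G ∅
  | vertex (v : V) : G0 G {v}
  | range (e : E) : G0 G (G.r e)
  | union {A B : Set V} : G0 G A → G0 G B → G0 G (A ∪ B)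
  | inter {A B : Set V} : G0 G A → G0 G B → (A ∩ B).Nonempty → G0 G (A ∩ B)

variable (G : Ultragraph V E)

/-- `ε(A)`, the set of edges emitted by `A`. -/
def eps (A : Set V) : Set E := {e | G.s e ∈ A}

/-- `A` is an infinite emitter if `ε(A)` is infinite. -/
def IsInfiniteEmitter (A : Set V) : Prop := (G.eps A).Infinite

/-- `A ∈ G⁰` is a minimal infinite emitter if it is an infinite emitter containing no proper
subset in `G⁰` that is an infinite emitter. -/
def IsMinimalInfiniteEmitter (A : Set V) : Prop :=
  G.G0 A ∧ G.IsInfiniteEmitter A ∧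
    ∀ B : Set V, G.G0 B → B ⊆ A → G.IsInfiniteEmitter B → B = A

/-- `G` has no sinks: every vertex emits at least one edge. -/
def NoSinks : Prop := ∀ v : V, ∃ e : E, G.s e = v

/-- Condition (RFUM): the range of each edge is a finite union of sets, each of which is a
minimal infinite emitter or a single vertex. -/
def RFUM : Prop := ∀ e : E, ∃ (n : ℕ) (A : Fin n → Set V),
  G.r e = ⋃ i, A i ∧ ∀ i, G.IsMinimalInfiniteEmitter (A i) ∨ ∃ v, A i = {v}

end Ultragraph

section Aux

variable {V E : Type*} (G : Ultragraph V E)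

lemma biInter_union_eq [DecidableEq E] (X Y : Finset E) :
    ⋂ e ∈ (X ∪ Y : Finset E), G.r e = (⋂ e ∈ X, G.r e) ∩ ⋂ e ∈ Y, G.r e := by
  rw [← Finset.set_biInter_coe, Finset.coe_union, Set.biInter_union,
    Finset.set_biInter_coe, Finset.set_biInter_coe]

lemma g0_biInter (X : Finset E) (hX : X.Nonempty) : G.G0 (⋂ e ∈ X, G.r e) := by
  classical
  by_cases hne : (⋂ e ∈ X, G.r e).Nonempty
  · revert hX hne
    induction X using Finset.induction_on with
    | empty => intro hX _; exact absurd hX (by simp)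
    | @insert a s ha ih =>
      intro _ hne
      rw [Finset.set_biInter_insert] at hne ⊢
      rcases s.eq_empty_or_nonempty with rfl | hs
      · simpa using Ultragraph.G0.range a
      · exact Ultragraph.G0.inter (Ultragraph.G0.range a)
          (ih hs (hne.mono Set.inter_subset_right)) hne
  · rw [Set.not_nonempty_iff_eq_empty] at hne
    rw [hne]; exact Ultragraph.G0.empty

lemma g0_finset (F : Finset V) : G.G0 (F : Set V) := by
  classical
  induction F using Finset.induction_on with
  | empty => simpa using Ultragraph.G0.empty
  | @insert a s ha ih =>
    rw [Finset.coe_insert, Set.insert_eq]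
    exact Ultragraph.G0.union (Ultragraph.G0.vertex a) ih

lemma g0_iUnion (n : ℕ) (A : Fin n → Set V) (h : ∀ i, G.G0 (A i)) :
    G.G0 (⋃ i, A i) := by
  induction n with
  | zero => simpa using Ultragraph.G0.empty
  | succ m ih =>
    have : (⋃ i, A i) = A 0 ∪ ⋃ i : Fin m, A i.succ := by
      ext x; simp [Fin.exists_fin_succ]
    rw [this]
    exact Ultragraph.G0.union (h 0) (ih _ fun i => h i.succ)

end Aux

section Aux2
variable {V E : Type*} (G : Ultragraph V E)

lemma iUnion_addCases {α : Type*} {n m : ℕ} (f : Fin n → Set α) (g : Fin m → Set α) :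
    ⋃ i : Fin (n + m), Fin.addCases f g i = (⋃ i, f i) ∪ ⋃ j, g j := by
  rw [← finSumFinEquiv.surjective.iUnion_comp _, Set.iUnion_sum]
  simp [finSumFinEquiv]

end Aux2

/-- Lemma 2.12 of Tomforde: `G⁰` consists exactly of the sets
`⋂_{e ∈ X₁} r(e) ∪ ⋯ ∪ ⋂_{e ∈ Xₙ} r(e) ∪ F` with `X₁, …, Xₙ` finite nonempty subsets of
the edge set and `F` a finite subset of the vertex set. -/
theorem stmt0 {V E : Type*} [Countable V] [Countable E] (G : Ultragraph V E) :
    {A : Set V | G.G0 A} =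
      {A : Set V | ∃ (n : ℕ) (X : Fin n → Finset E) (F : Finset V),
        (∀ i, (X i).Nonempty) ∧
        A = (⋃ i, ⋂ e ∈ (X i : Finset E), G.r e) ∪ (F : Set V)} := by
  classical
  ext A
  simp only [Set.mem_setOf_eq]
  constructor
  · intro h
    induction h with
    | empty => exact ⟨0, fun i => i.elim0, ∅, fun i => i.elim0, by simp⟩
    | vertex v => exact ⟨0, fun i => i.elim0, {v}, fun i => i.elim0, by simp⟩
    | range e => exact ⟨1, fun _ => {e}, ∅, fun _ => ⟨e, by simp⟩, by simp [Set.iUnion_const]⟩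
    | @union A B hA hB ihA ihB =>
      obtain ⟨n, X, F, hX, rfl⟩ := ihA
      obtain ⟨m, Y, F', hY, rfl⟩ := ihB
      refine ⟨n + m, Fin.addCases X Y, F ∪ F', ?_, ?_⟩
      · intro i
        refine i.addCases (fun j => ?_) (fun j => ?_)
        · simpa [Fin.addCases_left] using hX j
        · simpa [Fin.addCases_right] using hY j
      · have key : (⋃ i : Fin (n + m), ⋂ e ∈ (Fin.addCases X Y i : Finset E), G.r e)
            = (⋃ i, ⋂ e ∈ X i, G.r e) ∪ ⋃ j, ⋂ e ∈ Y j, G.r e := by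
          have := iUnion_addCases (fun i => ⋂ e ∈ X i, G.r e) (fun j => ⋂ e ∈ Y j, G.r e)
          rw [← this]
          apply Set.iUnion_congr
          intro i
          refine i.addCases (fun j => ?_) (fun j => ?_) <;>
            simp [Fin.addCases_left, Fin.addCases_right]
        rw [key, Finset.coe_union]
        ext x; simp; tauto
    | @inter A B hA hB hne ihA ihB =>
      obtain ⟨n, X, F, hX, hAeq⟩ := ihA
      obtain ⟨m, Y, F', hY, hBeq⟩ := ihB
      set U : Set V := ⋃ i, ⋂ e ∈ X i, G.r e with hU
      set U' : Set V := ⋃ j, ⋂ e ∈ Y j, G.r e with hU'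
      have hfin : ((A ∩ B) ∩ ((F : Set V) ∪ (F' : Set V))).Finite :=
        ((F.finite_toSet.union F'.finite_toSet).subset Set.inter_subset_right)
      refine ⟨n * m, fun k => X (finProdFinEquiv.symm k).1 ∪ Y (finProdFinEquiv.symm k).2,
        hfin.toFinset, fun k => (hX _).mono Finset.subset_union_left, ?_⟩
      have key : (⋃ k : Fin (n * m),
            ⋂ e ∈ (X (finProdFinEquiv.symm k).1 ∪ Y (finProdFinEquiv.symm k).2 : Finset E), G.r e)
          = U ∩ U' := by
        rw [← finProdFinEquiv.surjective.iUnion_comp _]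
        have : ∀ p : Fin n × Fin m,
            (⋂ e ∈ (X (finProdFinEquiv.symm (finProdFinEquiv p)).1
              ∪ Y (finProdFinEquiv.symm (finProdFinEquiv p)).2 : Finset E), G.r e)
            = (⋂ e ∈ X p.1, G.r e) ∩ ⋂ e ∈ Y p.2, G.r e := by
          intro p
          rw [Equiv.symm_apply_apply, biInter_union_eq]
        rw [Set.iUnion_congr this, Set.iUnion_prod' fun p : Fin n × Fin m =>
          (⋂ e ∈ X p.1, G.r e) ∩ ⋂ e ∈ Y p.2, G.r e, hU, hU', Set.iUnion_inter]
        exact Set.iUnion_congr fun i => by simp only []; rw [← Set.inter_iUnion]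
      rw [key, Set.Finite.coe_toFinset]
      ext x
      constructor
      · rintro ⟨hxA, hxB⟩
        by_cases hxF : x ∈ (F : Set V) ∪ (F' : Set V)
        · exact Or.inr ⟨⟨hxA, hxB⟩, hxF⟩
        · refine Or.inl ⟨?_, ?_⟩
          · rcases hAeq ▸ hxA with h | h
            · exact h
            · exact absurd (Or.inl h) hxF
          · rcases hBeq ▸ hxB with h | h
            · exact h
            · exact absurd (Or.inr h) hxF
      · rintro (⟨hxU, hxU'⟩ | ⟨hx, _⟩)
        · exact ⟨hAeq ▸ Or.inl hxU, hBeq ▸ Or.inl hxU'⟩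
        · exact hx
  · rintro ⟨n, X, F, hX, rfl⟩
    exact Ultragraph.G0.union (g0_iUnion G n _ fun i => g0_biInter G _ (hX i)) (g0_finset G F)
end

section
/- Let $\mathcal{G}$ be an ultragraph and $A\in\mathcal{G}^0$ a minimal infinite emitter. If the cardinality of $A$ is finite then $|A|=1$, and if the cardinality of $A$ is infinite then $A=\bigcap_{e\in Y} r(e)$ for some finite set $Y\subseteq\mathcal{G}^1$. -/
namespace UltraAux

open Ultragraph

variable {V E : Type*} (G : Ultragraph V E)

lemma eps_mono {A B : Set V} (h : A ⊆ B) : G.eps A ⊆ G.eps B := fun _ he => h he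

lemma eps_union (A B : Set V) : G.eps (A ∪ B) = G.eps A ∪ G.eps B := rfl

lemma eps_biUnion {ι : Type*} (S : Set ι) (f : ι → Set V) :
    G.eps (⋃ i ∈ S, f i) = ⋃ i ∈ S, G.eps (f i) := by
  ext e; simp [Ultragraph.eps]

/-- Every element of `G⁰` is a finite union of finite intersections of ranges together with
a finite set. -/
lemma decomp : ∀ {A : Set V}, G.G0 A → ∃ (S : Set (Finset E)) (F : Set V),
    S.Finite ∧ F.Finite ∧ (∀ Y ∈ S, Y.Nonempty) ∧
    A = (⋃ Y ∈ S, ⋂ e ∈ Y, G.r e) ∪ F := by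
  classical
  intro A h
  induction h with
  | empty => exact ⟨∅, ∅, by simp, by simp, by simp, by simp⟩
  | vertex v => exact ⟨∅, {v}, by simp, by simp, by simp, by simp⟩
  | range e =>
      refine ⟨{{e}}, ∅, by simp, by simp, by simp, ?_⟩
      simp
  | union hA hB ihA ihB =>
      obtain ⟨S₁, F₁, hS₁f, hF₁f, hS₁ne, h₁⟩ := ihA
      obtain ⟨S₂, F₂, hS₂f, hF₂f, hS₂ne, h₂⟩ := ihB
      refine ⟨S₁ ∪ S₂, F₁ ∪ F₂, hS₁f.union hS₂f, hF₁f.union hF₂f, ?_, ?_⟩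
      · rintro Y (hY | hY); exacts [hS₁ne Y hY, hS₂ne Y hY]
      · rw [h₁, h₂, Set.biUnion_union]
        ext x; simp only [Set.mem_union]; tauto
  | inter hA hB hne ihA ihB =>
      rename_i A' B'
      obtain ⟨S₁, F₁, hS₁f, hF₁f, hS₁ne, h₁⟩ := ihA
      obtain ⟨S₂, F₂, hS₂f, hF₂f, hS₂ne, h₂⟩ := ihB
      refine ⟨(fun p : Finset E × Finset E => p.1 ∪ p.2) '' (S₁ ×ˢ S₂),
        (F₁ ∩ B') ∪ (A' ∩ F₂), (hS₁f.prod hS₂f).image _,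
        (hF₁f.inter_of_left _).union (hF₂f.inter_of_right _), ?_, ?_⟩
      · rintro Y ⟨⟨Y₁, Y₂⟩, ⟨hY₁, hY₂⟩, rfl⟩
        exact Finset.Nonempty.mono Finset.subset_union_left (hS₁ne Y₁ hY₁)
      · ext x
        constructor
        · rintro ⟨hxA, hxB⟩
          by_cases hx1 : x ∈ F₁
          · exact Or.inr (Or.inl ⟨hx1, hxB⟩)
          by_cases hx2 : x ∈ F₂
          · exact Or.inr (Or.inr ⟨hxA, hx2⟩)
          · have hU₁ : x ∈ ⋃ Y ∈ S₁, ⋂ e ∈ Y, G.r e := by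
              rw [h₁] at hxA; rcases hxA with h | h; exact h; exact absurd h hx1
            have hU₂ : x ∈ ⋃ Y ∈ S₂, ⋂ e ∈ Y, G.r e := by
              rw [h₂] at hxB; rcases hxB with h | h; exact h; exact absurd h hx2
            simp only [Set.mem_iUnion, Set.mem_iInter, Finset.mem_coe] at hU₁ hU₂
            obtain ⟨Y₁, hY₁, hmem₁⟩ := hU₁
            obtain ⟨Y₂, hY₂, hmem₂⟩ := hU₂
            left
            simp only [Set.mem_iUnion, Set.mem_iInter, Set.mem_image, Set.mem_prod,
              Prod.exists]
            refine ⟨Y₁ ∪ Y₂, ⟨Y₁, Y₂, ⟨hY₁, hY₂⟩, rfl⟩, ?_⟩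
            intro e he
            rcases Finset.mem_union.mp he with h | h
            exacts [hmem₁ e h, hmem₂ e h]
        · rintro (hx | hx | hx)
          · simp only [Set.mem_iUnion, Set.mem_iInter, Set.mem_image, Set.mem_prod,
              Prod.exists] at hx
            obtain ⟨Y, ⟨Y₁, Y₂, ⟨hY₁, hY₂⟩, rfl⟩, hmem⟩ := hx
            constructor
            · rw [h₁]; left
              simp only [Set.mem_iUnion, Set.mem_iInter]
              exact ⟨Y₁, hY₁, fun e he => hmem e (Finset.mem_union_left _ he)⟩
            · rw [h₂]; left
              simp only [Set.mem_iUnion, Set.mem_iInter]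
              exact ⟨Y₂, hY₂, fun e he => hmem e (Finset.mem_union_right _ he)⟩
          · exact ⟨h₁ ▸ Or.inr hx.1, hx.2⟩
          · exact ⟨hx.1, h₂ ▸ Or.inr hx.2⟩

/-- A nonempty finite intersection of ranges is in `G⁰`. -/
lemma g0_biInter {Y : Finset E} (hY : Y.Nonempty) (hne : (⋂ e ∈ Y, G.r e).Nonempty) :
    G.G0 (⋂ e ∈ Y, G.r e) := by
  classical
  induction Y using Finset.cons_induction with
  | empty => exact absurd rfl hY.ne_empty
  | cons e Y' hf ih =>
      by_cases hY' : Y'.Nonempty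
      · have hrw : (⋂ x ∈ Finset.cons e Y' hf, G.r x) = G.r e ∩ ⋂ x ∈ Y', G.r x := by
          simp [Finset.cons_eq_insert, Finset.set_biInter_insert]
        rw [hrw] at hne ⊢
        have hsub : (⋂ x ∈ Y', G.r x).Nonempty := hne.mono Set.inter_subset_right
        exact Ultragraph.G0.inter (Ultragraph.G0.range e) (ih hY' hsub) hne
      · rw [Finset.not_nonempty_iff_eq_empty] at hY'
        subst hY'
        simpa using Ultragraph.G0.range e

end UltraAux

namespace UltraAux

variable {V E : Type*} (G : Ultragraph V E)

lemma eps_biUnion_finset (A : Set V) (hAf : A.Finite) :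
    G.eps A = ⋃ v ∈ A, G.eps {v} := by
  ext e; simp [Ultragraph.eps]

/-- If a finite set is an infinite emitter, some vertex in it is an infinite emitter. -/
lemma exists_vertex_infinite {F : Set V} (hF : F.Finite) (hinf : G.IsInfiniteEmitter F) :
    ∃ v ∈ F, G.IsInfiniteEmitter {v} := by
  by_contra hcon
  push_neg at hcon
  apply hinf
  rw [eps_biUnion_finset G F hF]
  exact hF.biUnion fun v hv => Set.not_infinite.mp (hcon v hv)

theorem stmt1' (G : Ultragraph V E)
    (A : Set V) (hA : G.IsMinimalInfiniteEmitter A) :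
    (A.Finite → ∃ v : V, A = {v}) ∧
      (A.Infinite → ∃ Y : Finset E, Y.Nonempty ∧ A = ⋂ e ∈ Y, G.r e) := by
  obtain ⟨hG0, hInf, hMin⟩ := hA
  constructor
  · intro hfin
    obtain ⟨v, hvA, hv⟩ := exists_vertex_infinite G hfin hInf
    exact ⟨v, (hMin {v} (Ultragraph.G0.vertex v) (Set.singleton_subset_iff.mpr hvA) hv).symm⟩
  · intro hinf
    obtain ⟨S, F, hSf, hFf, hSne, hdec⟩ := decomp G hG0
    by_cases hex : ∃ Y ∈ S, G.IsInfiniteEmitter (⋂ e ∈ Y, G.r e)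
    · obtain ⟨Y, hYS, hYinf⟩ := hex
      have hIne : (⋂ e ∈ Y, G.r e).Nonempty := by
        obtain ⟨e, he⟩ := hYinf.nonempty
        exact ⟨G.s e, he⟩
      have hsub : (⋂ e ∈ Y, G.r e) ⊆ A := by
        rw [hdec]
        intro x hx
        exact Or.inl (Set.mem_biUnion hYS hx)
      exact ⟨Y, hSne Y hYS,
        (hMin _ (g0_biInter G (hSne Y hYS) hIne) hsub hYinf).symm⟩
    · push_neg at hex
      exfalso
      have hUfin : (G.eps (⋃ Y ∈ S, ⋂ e ∈ Y, G.r e)).Finite := by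
        rw [eps_biUnion]
        exact hSf.biUnion fun Y hY => Set.not_infinite.mp (hex Y hY)
      have hFinf : G.IsInfiniteEmitter F := by
        intro hFfin
        apply hInf
        rw [hdec, eps_union]
        exact hUfin.union hFfin
      obtain ⟨v, hvF, hv⟩ := exists_vertex_infinite G hFf hFinf
      have hvA : v ∈ A := by rw [hdec]; exact Or.inr hvF
      have := hMin {v} (Ultragraph.G0.vertex v) (Set.singleton_subset_iff.mpr hvA) hv
      exact hinf (this ▸ Set.finite_singleton v)

end UltraAux

/-- If `A ∈ G⁰` is a minimal infinite emitter, then either `A` is finite, in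
which case it is a singleton, or `A` is infinite, in which case `A = ⋂_{e ∈ Y} r(e)` for
some finite nonempty set `Y` of edges. -/
theorem stmt1 {V E : Type*} [Countable V] [Countable E] (G : Ultragraph V E)
    (A : Set V) (hA : G.IsMinimalInfiniteEmitter A) :
    (A.Finite → ∃ v : V, A = {v}) ∧
      (A.Infinite → ∃ Y : Finset E, Y.Nonempty ∧ A = ⋂ e ∈ Y, G.r e) := by
  exact UltraAux.stmt1' G A hA
end

section
/- Let $\mathcal{G}$ be an ultragraph with no sinks satisfying Condition (RFUM). Then each $A\in\mathcal{G}^0$ can be written uniquely as $A=\bigcup_{n=1}^k A_n$ where there is a unique index $k$ such that $|A_k|<\infty$ and $|\varepsilon(A_k)|<\infty$, each $A_j$ for $j\neq k$ is a minimal infinite emitter, and $A_j\cap A_k=\emptyset$ for all $j\neq k$. -/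
/-!
Call `A = C ∪ ⋃₀ S` a decomposition when `S` is a finite family of minimal infinite emitters
and `ε(C)` is finite. Singletons and, by (RFUM), ranges have decompositions, and these are
stable under unions and nonempty intersections, hence every `A ∈ G⁰` has one. In the
intersection case two distinct minimal infinite emitters `X ≠ Y` meet in a set with finite
`ε(X ∩ Y)`: otherwise `X ∩ Y ∈ G⁰` would be an infinite emitter inside both, forcing
`X = X ∩ Y = Y`. The same minimality shows that every minimal infinite emitter contained in
`A` belongs to `S`, so `S` is determined by `A`, and then `C = A \ ⋃₀ S` once `C` is taken
disjoint from `⋃₀ S`. Without sinks `C = s(ε(C))`, so `C` is finite.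
-/

namespace Ultragraph

variable {V E : Type*} (G : Ultragraph V E)

lemma eps_mono {A B : Set V} (h : A ⊆ B) : G.eps A ⊆ G.eps B :=
  fun _ he => h he

lemma eps_union (A B : Set V) : G.eps (A ∪ B) = G.eps A ∪ G.eps B := rfl

lemma eps_iUnion {ι : Sort*} (A : ι → Set V) : G.eps (⋃ i, A i) = ⋃ i, G.eps (A i) :=
  Set.preimage_iUnion

lemma finite_of_finite_eps (hns : G.NoSinks) {A : Set V} (h : (G.eps A).Finite) :
    A.Finite := by
  rw [← Set.image_preimage_eq_of_subset (s := A) (f := G.s) fun v _ => hns v]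
  exact h.image G.s

variable {G}

lemma IsMinimalInfiniteEmitter.eq_of_infinite_eps_inter {X Y : Set V}
    (hX : G.IsMinimalInfiniteEmitter X) (hY : G.IsMinimalInfiniteEmitter Y)
    (h : (G.eps (X ∩ Y)).Infinite) : X = Y := by
  obtain ⟨e, he⟩ := h.nonempty
  have hXY : G.G0 (X ∩ Y) := .inter hX.1 hY.1 ⟨G.s e, he⟩
  exact (hX.2.2 _ hXY Set.inter_subset_left h).symm.trans
    (hY.2.2 _ hXY Set.inter_subset_right h)

lemma IsMinimalInfiniteEmitter.finite_eps_inter_of_ne {X Y : Set V}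
    (hX : G.IsMinimalInfiniteEmitter X) (hY : G.IsMinimalInfiniteEmitter Y) (hne : X ≠ Y) :
    (G.eps (X ∩ Y)).Finite :=
  Set.not_infinite.mp (mt (hX.eq_of_infinite_eps_inter hY) hne)

lemma isMinimalInfiniteEmitter_singleton {v : V} (h : G.IsInfiniteEmitter {v}) :
    G.IsMinimalInfiniteEmitter {v} := by
  refine ⟨.vertex v, h, fun B _ hsub hinf => ?_⟩
  rcases Set.subset_singleton_iff_eq.mp hsub with rfl | rfl
  · exact absurd Set.finite_empty hinf
  · rfl

variable (G)

structure IsDecomposition (A C : Set V) (S : Set (Set V)) : Prop where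
  finite : S.Finite
  isMinimalInfiniteEmitter : ∀ B ∈ S, G.IsMinimalInfiniteEmitter B
  finite_eps : (G.eps C).Finite
  eq : A = C ∪ ⋃₀ S

variable {G}

lemma isDecomposition_of_finite_eps {A : Set V} (h : (G.eps A).Finite) :
    G.IsDecomposition A A ∅ :=
  ⟨Set.finite_empty, by simp, h, by simp⟩

lemma IsMinimalInfiniteEmitter.isDecomposition {A : Set V}
    (h : G.IsMinimalInfiniteEmitter A) : G.IsDecomposition A ∅ {A} :=
  ⟨Set.finite_singleton A, by simpa using h, Set.finite_empty, by simp⟩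

lemma exists_isDecomposition_singleton (v : V) : ∃ C S, G.IsDecomposition {v} C S := by
  by_cases h : (G.eps {v}).Finite
  · exact ⟨_, _, isDecomposition_of_finite_eps h⟩
  · exact ⟨_, _, (isMinimalInfiniteEmitter_singleton h).isDecomposition⟩

namespace IsDecomposition

lemma subset_of_mem {A B C : Set V} {S : Set (Set V)} (h : G.IsDecomposition A C S)
    (hB : B ∈ S) : B ⊆ A :=
  h.eq ▸ Set.subset_union_of_subset_right (Set.subset_sUnion_of_mem hB) C

lemma union {A B C₁ C₂ : Set V} {S₁ S₂ : Set (Set V)} (h₁ : G.IsDecomposition A C₁ S₁)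
    (h₂ : G.IsDecomposition B C₂ S₂) : G.IsDecomposition (A ∪ B) (C₁ ∪ C₂) (S₁ ∪ S₂) where
  finite := h₁.finite.union h₂.finite
  isMinimalInfiniteEmitter B hB := hB.elim (h₁.isMinimalInfiniteEmitter B)
    (h₂.isMinimalInfiniteEmitter B)
  finite_eps := h₁.finite_eps.union h₂.finite_eps
  eq := by rw [h₁.eq, h₂.eq, Set.sUnion_union, Set.union_union_union_comm]

lemma iUnion {ι : Type*} [Finite ι] {A C : ι → Set V} {S : ι → Set (Set V)}
    (h : ∀ i, G.IsDecomposition (A i) (C i) (S i)) :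
    G.IsDecomposition (⋃ i, A i) (⋃ i, C i) (⋃ i, S i) where
  finite := Set.finite_iUnion fun i => (h i).finite
  isMinimalInfiniteEmitter B hB :=
    let ⟨i, hi⟩ := Set.mem_iUnion.mp hB
    (h i).isMinimalInfiniteEmitter B hi
  finite_eps := by
    rw [eps_iUnion]
    exact Set.finite_iUnion fun i => (h i).finite_eps
  eq := by simp only [fun i => (h i).eq, Set.iUnion_union_distrib, Set.sUnion_iUnion]

lemma inter {A B C₁ C₂ : Set V} {S₁ S₂ : Set (Set V)} (h₁ : G.IsDecomposition A C₁ S₁)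
    (h₂ : G.IsDecomposition B C₂ S₂) :
    G.IsDecomposition (A ∩ B) ((A ∩ B) \ ⋃₀ (S₁ ∩ S₂)) (S₁ ∩ S₂) where
  finite := h₁.finite.inter_of_left S₂
  isMinimalInfiniteEmitter X hX := h₁.isMinimalInfiniteEmitter X hX.1
  finite_eps := by
    have hcover : (A ∩ B) \ ⋃₀ (S₁ ∩ S₂) ⊆
        C₁ ∪ C₂ ∪ ⋃ X ∈ S₁, ⋃ Y ∈ S₂ \ {X}, X ∩ Y := by
      rintro v ⟨⟨hvA, hvB⟩, hvS⟩
      rw [h₁.eq] at hvA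
      rw [h₂.eq] at hvB
      rcases hvA with hvC₁ | ⟨X, hX, hvX⟩
      · exact .inl (.inl hvC₁)
      rcases hvB with hvC₂ | ⟨Y, hY, hvY⟩
      · exact .inl (.inr hvC₂)
      have hXY : Y ≠ X := by
        rintro rfl
        exact hvS ⟨Y, ⟨hX, hY⟩, hvX⟩
      exact .inr (Set.mem_biUnion hX (Set.mem_biUnion ⟨hY, hXY⟩ ⟨hvX, hvY⟩))
    refine Set.Finite.subset ?_ (eps_mono G hcover)
    simp only [eps_union, eps_iUnion]
    refine (h₁.finite_eps.union h₂.finite_eps).union (h₁.finite.biUnion fun X hX => ?_)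
    refine (h₂.finite.sdiff).biUnion fun Y hY => ?_
    exact (h₁.isMinimalInfiniteEmitter X hX).finite_eps_inter_of_ne
      (h₂.isMinimalInfiniteEmitter Y hY.1) (Ne.symm hY.2)
  eq := (Set.sdiff_union_of_subset (Set.sUnion_subset fun _ hX =>
    Set.subset_inter (h₁.subset_of_mem hX.1) (h₂.subset_of_mem hX.2))).symm

lemma diff_sUnion {A C : Set V} {S : Set (Set V)} (h : G.IsDecomposition A C S) :
    G.IsDecomposition A (C \ ⋃₀ S) S where
  finite := h.finite
  isMinimalInfiniteEmitter := h.isMinimalInfiniteEmitter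
  finite_eps := h.finite_eps.subset (eps_mono G Set.sdiff_subset)
  eq := by rw [Set.sdiff_union_self, h.eq]

lemma mem_of_subset {A B C : Set V} {S : Set (Set V)} (h : G.IsDecomposition A C S)
    (hB : G.IsMinimalInfiniteEmitter B) (hBA : B ⊆ A) : B ∈ S := by
  by_contra hBS
  have hcover : G.eps B ⊆ G.eps C ∪ ⋃ X ∈ S, G.eps (B ∩ X) := by
    intro e he
    rcases h.eq ▸ hBA he with hC | ⟨X, hX, hXe⟩
    · exact .inl hC
    · exact .inr (Set.mem_biUnion hX ⟨he, hXe⟩)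
  refine hB.2.1 ((h.finite_eps.union (h.finite.biUnion fun X hX => ?_)).subset hcover)
  exact hB.finite_eps_inter_of_ne (h.isMinimalInfiniteEmitter X hX)
    (ne_of_mem_of_not_mem hX hBS).symm

lemma eq_diff_sUnion {A C : Set V} {S : Set (Set V)} (h : G.IsDecomposition A C S)
    (hdisj : ∀ B ∈ S, B ∩ C = ∅) : C = A \ ⋃₀ S := by
  have hCS : Disjoint C (⋃₀ S) := Set.disjoint_sUnion_right.mpr fun B hB =>
    Set.disjoint_iff_inter_eq_empty.mpr (by rw [Set.inter_comm, hdisj B hB])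
  rw [h.eq, Set.union_sdiff_right, hCS.sdiff_eq_left]

end IsDecomposition

lemma exists_isDecomposition (hrfum : G.RFUM) {A : Set V} (hA : G.G0 A) :
    ∃ C S, G.IsDecomposition A C S := by
  induction hA with
  | empty => exact ⟨∅, ∅, isDecomposition_of_finite_eps (by simp [eps])⟩
  | vertex v => exact exists_isDecomposition_singleton v
  | range e =>
    obtain ⟨n, A, hr, hA⟩ := hrfum e
    have hpiece : ∀ i, ∃ C S, G.IsDecomposition (A i) C S := fun i => by
      rcases hA i with hmin | ⟨v, hv⟩
      · exact ⟨_, _, hmin.isDecomposition⟩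
      · exact hv ▸ exists_isDecomposition_singleton v
    choose C S hCS using hpiece
    exact ⟨_, _, hr ▸ IsDecomposition.iUnion hCS⟩
  | union _ _ ih₁ ih₂ =>
    obtain ⟨_, _, h₁⟩ := ih₁
    obtain ⟨_, _, h₂⟩ := ih₂
    exact ⟨_, _, h₁.union h₂⟩
  | inter _ _ _ ih₁ ih₂ =>
    obtain ⟨_, _, h₁⟩ := ih₁
    obtain ⟨_, _, h₂⟩ := ih₂
    exact ⟨_, _, h₁.inter h₂⟩

end Ultragraph

theorem stmt2_general {V E : Type*} (G : Ultragraph V E)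
    (hns : G.NoSinks) (hrfum : G.RFUM) (A : Set V) (hA : G.G0 A) :
    ∃! p : Set V × Set (Set V),
      p.2.Finite ∧ (∀ B ∈ p.2, G.IsMinimalInfiniteEmitter B) ∧
      p.1.Finite ∧ (G.eps p.1).Finite ∧
      (∀ B ∈ p.2, B ∩ p.1 = ∅) ∧
      A = p.1 ∪ ⋃₀ p.2 := by
  obtain ⟨C, S, hdec⟩ := G.exists_isDecomposition hrfum hA
  have hdisj : ∀ B ∈ S, B ∩ (C \ ⋃₀ S) = ∅ := fun B hB =>
    Set.eq_empty_of_forall_notMem fun _ hx => hx.2.2 ⟨B, hB, hx.1⟩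
  have hdec' := hdec.diff_sUnion
  refine ⟨(C \ ⋃₀ S, S), ⟨hdec'.finite, hdec'.isMinimalInfiniteEmitter,
    G.finite_of_finite_eps hns hdec'.finite_eps, hdec'.finite_eps, hdisj, hdec'.eq⟩, ?_⟩
  rintro ⟨D, T⟩ ⟨hTfin, hTmin, -, hDeps, hTdisj, hTeq⟩
  have hdecT : G.IsDecomposition A D T := ⟨hTfin, hTmin, hDeps, hTeq⟩
  have hTS : T = S := Set.ext fun X =>
    ⟨fun hX => hdec'.mem_of_subset (hTmin X hX) (hdecT.subset_of_mem hX),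
      fun hX => hdecT.mem_of_subset (hdec.isMinimalInfiniteEmitter X hX) (hdec.subset_of_mem hX)⟩
  subst hTS
  rw [hdecT.eq_diff_sUnion hTdisj, hdec'.eq_diff_sUnion hdisj]

/-- for an ultragraph with no sinks satisfying Condition (RFUM), every
`A ∈ G⁰` can be written uniquely as a union `A = C ∪ ⋃₀ S` where `C` (the part "`A_k`")
is finite with finitely many outgoing edges, `S` is a finite collection of minimal
infinite emitters (the parts "`A_j`, `j ≠ k`"), and every member of `S` is disjoint
from `C`. -/
theorem stmt2 {V E : Type*} [Countable V] [Countable E] (G : Ultragraph V E)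
    (hns : G.NoSinks) (hrfum : G.RFUM) (A : Set V) (hA : G.G0 A) :
    ∃! p : Set V × Set (Set V),
      p.2.Finite ∧ (∀ B ∈ p.2, G.IsMinimalInfiniteEmitter B) ∧
      p.1.Finite ∧ (G.eps p.1).Finite ∧
      (∀ B ∈ p.2, B ∩ p.1 = ∅) ∧
      A = p.1 ∪ ⋃₀ p.2 :=
  stmt2_general G hns hrfum A hA
end

section
/- Let $\mathcal{G}$ be an ultragraph with no sinks satisfying Condition (RFUM), and consider the decomposition from the uniqueness lemma: each $A\in\mathcal{G}^0$ equals $\bigcup_{n=1}^k A_n$ with $A_k$ finite with finitely many outgoing edges, and $A_j$ ($j\neq k$) minimal infinite emitters disjoint from $A_k$. Suppose $A = \cup_{i=1}^{n} A_i = \cup_{i=1}^m A_i'$ are two such decompositions. If $A_i$ is a minimal infinite emitter with $|A_i|=1$, then $A_i = A_j'$ for some minimal infinite emitter $A_j'$ in the second decomposition; if $A_i$ is a minimal infinite emitter with $|A_i|=\infty$, then there exists $j$ with $|A_i\cap A_j'|=\infty$ and $A_i=A_j'$. -/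
/-- Given two decompositions `A = ⋃ᵢ Aᵢ = ⋃ᵢ Aᵢ'` of a set `A ∈ G⁰` as in
the uniqueness lemma (a distinguished finite index with finitely many outgoing edges, all
other parts minimal infinite emitters disjoint from it), every minimal-infinite-emitter
part of the first decomposition which is a singleton equals some minimal-infinite-emitter
part of the second decomposition, and every infinite such part `Aᵢ` admits `j` with
`Aᵢ ∩ Aⱼ'` infinite and `Aᵢ = Aⱼ'`. -/
theorem stmt3 {V E : Type*} [Countable V] [Countable E] (G : Ultragraph V E)
    (hns : G.NoSinks) (hrfum : G.RFUM)
    (A : Set V) (hA : G.G0 A)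
    (n m : ℕ) (A₁ : Fin n → Set V) (A₂ : Fin m → Set V) (k : Fin n) (k' : Fin m)
    (hun₁ : A = ⋃ i, A₁ i) (hun₂ : A = ⋃ j, A₂ j)
    (hk₁ : (A₁ k).Finite) (hk₁' : (G.eps (A₁ k)).Finite)
    (hk₂ : (A₂ k').Finite) (hk₂' : (G.eps (A₂ k')).Finite)
    (hmin₁ : ∀ i, i ≠ k → G.IsMinimalInfiniteEmitter (A₁ i))
    (hmin₂ : ∀ j, j ≠ k' → G.IsMinimalInfiniteEmitter (A₂ j))
    (hdisj₁ : ∀ i, i ≠ k → A₁ i ∩ A₁ k = ∅)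
    (hdisj₂ : ∀ j, j ≠ k' → A₂ j ∩ A₂ k' = ∅) :
    ∀ i, i ≠ k →
      ((∃ v, A₁ i = {v}) → ∃ j, j ≠ k' ∧ G.IsMinimalInfiniteEmitter (A₂ j) ∧ A₁ i = A₂ j) ∧
      ((A₁ i).Infinite → ∃ j, (A₁ i ∩ A₂ j).Infinite ∧ A₁ i = A₂ j) := by

  intro i hi
  obtain ⟨hG0i, hIEi, hmini⟩ := hmin₁ i hi
  have hkey : ∀ B : Set V, B.Infinite → G.IsInfiniteEmitter B := by
    intro B hB
    choose f hf using hns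
    have hsub : f '' B ⊆ G.eps B := by
      rintro _ ⟨v, hv, rfl⟩
      simpa [Ultragraph.eps, hf v] using hv
    exact (hB.image (fun x _ y _ h => by rw [← hf x, ← hf y, h])).mono hsub
  constructor
  · rintro ⟨v, hv⟩
    have hvA : v ∈ A := by
      rw [hun₁]; exact Set.mem_iUnion.2 ⟨i, by rw [hv]; exact rfl⟩
    rw [hun₂] at hvA
    obtain ⟨j, hj⟩ := Set.mem_iUnion.1 hvA
    have hsub : A₁ i ⊆ A₂ j := by rw [hv]; exact Set.singleton_subset_iff.2 hj
    have hIEj : G.IsInfiniteEmitter (A₂ j) := hIEi.mono (fun e he => hsub he)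
    have hjk : j ≠ k' := by rintro rfl; exact hIEj hk₂'
    obtain ⟨hG0j, _, hminj⟩ := hmin₂ j hjk
    exact ⟨j, hjk, hmin₂ j hjk, hminj (A₁ i) hG0i hsub hIEi⟩
  · intro hinf
    have hex : ¬ ∀ j, (A₁ i ∩ A₂ j).Finite := by
      intro hall
      apply hinf
      have hsub : A₁ i ⊆ ⋃ j, A₁ i ∩ A₂ j := by
        intro x hx
        have hxA : x ∈ A := by rw [hun₁]; exact Set.mem_iUnion.2 ⟨i, hx⟩
        rw [hun₂] at hxA
        obtain ⟨j, hj⟩ := Set.mem_iUnion.1 hxA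
        exact Set.mem_iUnion.2 ⟨j, hx, hj⟩
      exact (Set.finite_iUnion hall).subset hsub
    push_neg at hex
    obtain ⟨j, hj⟩ := hex
    replace hj : (A₁ i ∩ A₂ j).Infinite := hj
    have hjk : j ≠ k' := by
      rintro rfl
      exact hj (hk₂.inter_of_right _)
    obtain ⟨hG0j, hIEj, hminj⟩ := hmin₂ j hjk
    have hG0int : G.G0 (A₁ i ∩ A₂ j) := Ultragraph.G0.inter hG0i hG0j hj.nonempty
    have hIEint := hkey _ hj
    have h1 := hmini _ hG0int Set.inter_subset_left hIEint
    have h2 := hminj _ hG0int Set.inter_subset_right hIEint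
    exact ⟨j, hj, by rw [← h1, h2]⟩
end

section
/- Let $\mathcal{G}$ be an ultragraph with no sinks satisfying Condition (RFUM), let $M:\mathcal{G}^1\to[0,1]$, let $m:\mathcal{G}^0\to[0,1]$ satisfy: (m2') $m(A)=\sum_{e:s(e)\in A}M(e)m(r(e))$ whenever $|\varepsilon(A)|<\infty$; (m3') $m(A)\geq\sum_{e\in F}M(e)m(r(e))$ for every finite $F\subseteq\varepsilon(A)$; and (m4') $m(A\cup B)=m(A)+m(B)-m(A\cap B)$ for $A,B\in\mathcal{G}^0$. Extend $M$ multiplicatively to finite paths and define $\kappa(D_{(\beta,B),F})=M(\beta)m(B)-\sum_{e\in F}M(\beta e)m(r(e))$ on the semi-ring $S$ of cylinder sets, with $\kappa(\emptyset)=0$. Then $\kappa$ is finitely additive on $S$: if a cylinder $D_{(\beta,B),F}\in S$ is a finite disjoint union $\bigsqcup_{i=1}^n D_{(\beta_i,B_i),F_i}$ of elements of $S$, then $\kappa(D_{(\beta,B),F})=\sum_{i=1}^n\kappa(D_{(\beta_i,B_i),F_i})$. -/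
namespace Ultragraph

variable {V E : Type*}

variable (G : Ultragraph V E)

/-- A finite path: a list of edges such that the source of each edge lies in the range of
the previous one. -/
def IsPath (l : List E) : Prop := l.Chain' (fun e f => G.s f ∈ G.r e)

/-- An ultrapath `(β, B)`: a finite path `β` together with `B ∈ G⁰`, `B ⊆ r(β)`
(no constraint beyond `B ∈ G⁰` when `β` has length zero). -/
def IsUPath (β : List E) (B : Set V) : Prop :=
  G.IsPath β ∧ G.G0 B ∧ B.Nonempty ∧ ∀ h : β ≠ [], B ⊆ G.r (β.getLast h)

/-- Points of the shift space: finite ultrapaths `(β, A)` or infinite paths. -/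
inductive Pt (V E : Type*) where
  | fin (β : List E) (A : Set V) : Pt V E
  | inf (γ : ℕ → E) : Pt V E

/-- Membership in the shift space `X = X_fin ∪ 𝔭^∞`: a pair `(β, A)` with `A` a minimal
infinite emitter in `r(β)`, or an infinite path. -/
def IsPt : Pt V E → Prop
  | .fin β A => G.IsPath β ∧ G.IsMinimalInfiniteEmitter A ∧
      ∀ h : β ≠ [], A ⊆ G.r (β.getLast h)
  | .inf γ => ∀ n, G.s (γ (n + 1)) ∈ G.r (γ n)

/-- The shift space `X` associated to the ultragraph. -/
def SSp := {x : Pt V E // G.IsPt x}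

/-- Membership in the cylinder `D_{(β,B)}`. -/
def inD (β : List E) (B : Set V) : Pt V E → Prop
  | .fin β' A' => (β' = β ∧ A' ⊆ B) ∨
      (β'.take β.length = β ∧ ∃ e, (β'.drop β.length).head? = some e ∧ G.s e ∈ B)
  | .inf γ => (∀ i : Fin β.length, γ i = β.get i) ∧ G.s (γ β.length) ∈ B

/-- Membership in the cylinder `D_{(β,B),F}`. -/
def inDF (β : List E) (B : Set V) (F : Set E) : Pt V E → Prop
  | .fin β' A' => (β' = β ∧ A' = B) ∨
      (β'.take β.length = β ∧ ∃ e, (β'.drop β.length).head? = some e ∧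
        G.s e ∈ B ∧ e ∉ F)
  | .inf γ => (∀ i : Fin β.length, γ i = β.get i) ∧ G.s (γ β.length) ∈ B ∧
      γ β.length ∉ F

/-- The cylinder set `D_{(β,B)} ⊆ X`. -/
def D (β : List E) (B : Set V) : Set G.SSp := {x | G.inD β B x.val}

/-- The cylinder set `D_{(β,B),F} ⊆ X`. -/
def DF (β : List E) (B : Set V) (F : Set E) : Set G.SSp := {x | G.inDF β B F x.val}

/-- The set `X_A = {x ∈ X : s(x) ⊆ A}` (for length-zero points) resp. `s(x) ∈ A`. -/
def inXA (A : Set V) : Pt V E → Prop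
  | .fin [] B => B ⊆ A
  | .fin (e :: _) _ => G.s e ∈ A
  | .inf γ => G.s (γ 0) ∈ A

def XA (A : Set V) : Set G.SSp := {x | G.inXA A x.val}

/-- The topology on `X`, generated by the cylinder sets. -/
instance : TopologicalSpace G.SSp :=
  TopologicalSpace.generateFrom
    ({C | ∃ β B, G.IsUPath β B ∧ C = G.D β B} ∪
      {C | ∃ β B F, G.IsUPath β B ∧ G.IsMinimalInfiniteEmitter B ∧
        F ⊆ G.eps B ∧ F.Finite ∧ C = G.DF β B F})

instance : MeasurableSpace G.SSp := borel G.SSp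

instance : BorelSpace G.SSp := ⟨rfl⟩

/-- The semi-ring `S` of cylinder sets: the empty set, the sets `D_{(β,B),F}` with
`(β,B) ∈ X_fin` and `F ⊆ ε(B)` finite, and the sets `D_{(α,A)}` with `(α,A) ∈ 𝔭` and
`ε(A)` finite. -/
def cylSR : Set (Set G.SSp) :=
  {∅} ∪
    {C | ∃ β B F, G.IsUPath β B ∧ G.IsMinimalInfiniteEmitter B ∧
      F ⊆ G.eps B ∧ F.Finite ∧ C = G.DF β B F} ∪
    {C | ∃ β B, G.IsUPath β B ∧ (G.eps B).Finite ∧ C = G.D β B}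

/-- Prepending an edge to a point of the shift space (the raw map underlying `θ_e`). -/
def prep (e : E) : Pt V E → Pt V E
  | .fin β A => .fin (e :: β) A
  | .inf γ => .inf (fun n => match n with | 0 => e | k + 1 => γ k)

/-- The image `θ_e(W)` of `W ⊆ X_{e⁻¹}` under the partial homeomorphism `θ_e`. -/
def thetaImg (e : E) (W : Set G.SSp) : Set G.SSp :=
  {x | ∃ y ∈ W, x.val = prep e y.val}

end Ultragraph

namespace Ultragraph

variable {V E : Type*} (G : Ultragraph V E)

/-- The multiplicative extension of `M : 𝒢¹ → [0,1]` to finite paths. -/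
def Mext (M : E → ℝ) (l : List E) : ℝ := (l.map M).prod

/-- The premeasure `κ(D_{(β,B),F}) = M(β) m(B) − ∑_{e ∈ F} M(βe) m(r(e))`. -/
def kappaForm (M : E → ℝ) (m : Set V → ℝ) (β : List E) (B : Set V) (F : Finset E) : ℝ :=
  Mext M β * m B - ∑ e ∈ F, Mext M β * M e * m (G.r e)

/-- `(β,B,F)` defines an element of the semi-ring `S` of generalized cylinder sets. -/
def ValidCyl (β : List E) (B : Set V) (F : Finset E) : Prop :=
  G.IsUPath β B ∧
    ((G.IsMinimalInfiniteEmitter B ∧ (F : Set E) ⊆ G.eps B) ∨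
      ((G.eps B).Finite ∧ F = ∅))

end Ultragraph

/-!
Compute `κ` in `ℝ≥0∞` and call `d(A) = m(A) - ∑_{e ∈ ε(A)} M(e) m(r(e))` the defect of `A`; by
(m2') it vanishes when `ε(A)` is finite, and by (m4') it is additive along unions whose pairwise
intersections emit finitely many edges. Condition (RFUM) then makes `d(r(e))` the sum of `d(A)`
over the minimal infinite emitters `A ⊆ r(e)`, i.e. over the finite points `(αe, A)` of `X`.

Splitting `m(r(α)) = ∑_{s(e) ∈ r(α)} M(e) m(r(e)) + d(r(α))` level after level gives, for every
`ℓ > |β|`,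
  `κ(D_{(β,B),F}) = ∑_{(α,A) ∈ D, |α| < ℓ} M(α) d(A) + ∑_{|α| = ℓ, [α] ⊆ D} M(α) m(r(α))`.
Once `ℓ` exceeds the lengths of all the paths in a decomposition `D = ⨆ᵢ Dᵢ`, both terms are
additive in `D`: the first is a sum over the points of `D`, and in the second a path `α` of length
`ℓ` lies in `D` exactly when an infinite path extending `α` does (one exists as there are no
sinks).
-/

open Function

theorem ENNReal.tsum_tsum_append_singleton {α : Type*} (f : List α → ENNReal) (hf : f [] = 0) :
    ∑' l, ∑' a, f (l ++ [a]) = ∑' l, f l := by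
  have hinj : Function.Injective fun p : List α × α => p.1 ++ [p.2] := fun p q h => by
    obtain ⟨h1, h2⟩ := List.append_inj' h rfl
    exact Prod.ext h1 (List.singleton_injective h2)
  have hsupp : Function.support f ⊆ Set.range fun p : List α × α => p.1 ++ [p.2] := by
    intro l hl
    have hne : l ≠ [] := by rintro rfl; exact hl hf
    exact ⟨(l.dropLast, l.getLast hne), List.dropLast_append_getLast hne⟩
  rw [← hinj.tsum_eq hsupp, ENNReal.tsum_prod']

theorem Set.indicator_iUnion_apply_of_pairwise_disjoint {ι α β : Type*} [Fintype ι]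
    [AddCommMonoid β] {s : ι → Set α} (hs : Pairwise (Disjoint on s)) (f : α → β) (x : α) :
    (⋃ i, s i).indicator f x = ∑ i, (s i).indicator f x := by
  simpa using Finset.indicator_biUnion_apply Finset.univ s (hs.set_pairwise _) x

theorem ENNReal.tsum_indicator_iUnion {ι α : Type*} [Fintype ι] {s : ι → Set α}
    (hs : Pairwise (Disjoint on s)) (f : α → ENNReal) :
    ∑' x, (⋃ i, s i).indicator f x = ∑ i, ∑' x, (s i).indicator f x := by
  simp only [Set.indicator_iUnion_apply_of_pairwise_disjoint hs]
  exact Summable.tsum_finsetSum fun _ _ => ENNReal.summable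

namespace Ultragraph

open scoped ENNReal Classical

section

variable {V E : Type*} (G : Ultragraph V E)

theorem G0_inter {A B : Set V} (hA : G.G0 A) (hB : G.G0 B) : G.G0 (A ∩ B) := by
  rcases (A ∩ B).eq_empty_or_nonempty with h | h
  · exact h ▸ G0.empty
  · exact G0.inter hA hB h

theorem G0_biUnion {S : Finset (Set V)} (hS : ∀ p ∈ S, G.G0 p) : G.G0 (⋃ p ∈ S, p) := by
  induction S using Finset.induction_on with
  | empty => simpa using G0.empty
  | insert a S _ ih =>
    rw [Finset.set_biUnion_insert]
    exact G0.union (hS a (S.mem_insert_self a)) (ih fun p hp => hS p (Finset.mem_insert_of_mem hp))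

/-- Conditions (m2'), (m3') and (m4') on weights with values in `ℝ≥0∞`, `m` being finite. -/
structure IsWeightSystem (M : E → ℝ≥0∞) (m : Set V → ℝ≥0∞) : Prop where
  ne_top : ∀ A, G.G0 A → m A ≠ ∞
  eq_sum_of_finite : ∀ A, G.G0 A → ∀ hfin : (G.eps A).Finite,
    m A = ∑ e ∈ hfin.toFinset, M e * m (G.r e)
  sum_le : ∀ A, G.G0 A → ∀ F : Finset E, (F : Set E) ⊆ G.eps A →
    ∑ e ∈ F, M e * m (G.r e) ≤ m A
  union_add_inter : ∀ A B, G.G0 A → G.G0 B → m (A ∪ B) + m (A ∩ B) = m A + m B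

variable (M : E → ℝ≥0∞) (m : Set V → ℝ≥0∞)

noncomputable def emission (A : Set V) : ℝ≥0∞ :=
  ∑' e, (G.eps A).indicator (fun e => M e * m (G.r e)) e

noncomputable def defect (A : Set V) : ℝ≥0∞ := m A - G.emission M m A

theorem emission_union_add_inter (A B : Set V) :
    G.emission M m (A ∪ B) + G.emission M m (A ∩ B) = G.emission M m A + G.emission M m B := by
  simp only [emission, ← ENNReal.tsum_add]
  exact tsum_congr fun e => Set.indicator_union_add_inter_apply _ (G.eps A) (G.eps B) e

namespace IsWeightSystem

variable {G M m} (hw : G.IsWeightSystem M m)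
include hw

theorem emission_le {A : Set V} (hA : G.G0 A) : G.emission M m A ≤ m A := by
  rw [emission, ENNReal.tsum_eq_iSup_sum]
  refine iSup_le fun s => ?_
  rw [Finset.sum_indicator_eq_sum_filter]
  exact hw.sum_le A hA _ fun e he => (Finset.mem_filter.1 he).2

theorem emission_add_defect {A : Set V} (hA : G.G0 A) :
    G.emission M m A + G.defect M m A = m A :=
  add_tsub_cancel_of_le (hw.emission_le hA)

theorem defect_eq_zero_of_finite {A : Set V} (hA : G.G0 A) (hfin : (G.eps A).Finite) :
    G.defect M m A = 0 := by
  have : G.emission M m A = m A := by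
    rw [emission, hw.eq_sum_of_finite A hA hfin, sum_eq_tsum_indicator, hfin.coe_toFinset]
  rw [defect, this, tsub_self]

theorem defect_union_add_inter {A B : Set V} (hA : G.G0 A) (hB : G.G0 B) :
    G.defect M m (A ∪ B) + G.defect M m (A ∩ B) = G.defect M m A + G.defect M m B := by
  have hfin : G.emission M m A + G.emission M m B ≠ ∞ :=
    ENNReal.add_ne_top.2 ⟨ne_top_of_le_ne_top (hw.ne_top A hA) (hw.emission_le hA),
      ne_top_of_le_ne_top (hw.ne_top B hB) (hw.emission_le hB)⟩
  refine (ENNReal.add_left_inj hfin).1 ?_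
  calc G.defect M m (A ∪ B) + G.defect M m (A ∩ B) + (G.emission M m A + G.emission M m B)
      = (G.emission M m (A ∪ B) + G.defect M m (A ∪ B))
          + (G.emission M m (A ∩ B) + G.defect M m (A ∩ B)) := by
        rw [← emission_union_add_inter]; ring
    _ = m A + m B := by
        rw [hw.emission_add_defect (G0.union hA hB), hw.emission_add_defect (G.G0_inter hA hB),
          hw.union_add_inter A B hA hB]
    _ = G.defect M m A + G.defect M m B + (G.emission M m A + G.emission M m B) := by
        rw [← hw.emission_add_defect hA, ← hw.emission_add_defect hB]; ring

theorem defect_biUnion {S : Finset (Set V)} (hS : ∀ p ∈ S, G.G0 p)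
    (hpair : (S : Set (Set V)).Pairwise fun p q => (G.eps (p ∩ q)).Finite) :
    G.defect M m (⋃ p ∈ S, p) = ∑ p ∈ S, G.defect M m p := by
  induction S using Finset.induction_on with
  | empty =>
    simpa using hw.defect_eq_zero_of_finite G0.empty (by simp [eps])
  | insert a S ha ih =>
    have hS' : ∀ p ∈ S, G.G0 p := fun p hp => hS p (Finset.mem_insert_of_mem hp)
    have ha0 : G.G0 a := hS a (S.mem_insert_self a)
    have hinter : (G.eps (a ∩ ⋃ p ∈ S, p)).Finite := by
      rw [Set.inter_iUnion₂]
      have h : G.eps (⋃ p ∈ S, a ∩ p) = ⋃ p ∈ S, G.eps (a ∩ p) := Set.preimage_iUnion₂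
      rw [h]
      exact S.finite_toSet.biUnion fun p hp =>
        hpair (S.mem_insert_self a) (Finset.mem_insert_of_mem hp) fun h => ha (h ▸ hp)
    have h := hw.defect_union_add_inter ha0 (G.G0_biUnion hS')
    rw [hw.defect_eq_zero_of_finite (G.G0_inter ha0 (G.G0_biUnion hS')) hinter, add_zero] at h
    rw [Finset.set_biUnion_insert, Finset.sum_insert ha, h,
      ih hS' (hpair.mono (by simp))]

end IsWeightSystem

end

section

variable {V E : Type*} {G : Ultragraph V E}

theorem IsInfiniteEmitter.nonempty {A : Set V} (h : G.IsInfiniteEmitter A) : A.Nonempty :=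
  let ⟨e, he⟩ := Set.Infinite.nonempty h
  ⟨G.s e, he⟩

theorem eq_of_subset_of_mie_or_singleton {A X : Set V}
    (hA : G.IsMinimalInfiniteEmitter A ∨ ∃ v, A = {v}) (hX : G.G0 X) (hXA : X ⊆ A)
    (hinf : G.IsInfiniteEmitter X) : X = A := by
  rcases hA with hA | ⟨v, rfl⟩
  · exact hA.2.2 X hX hXA hinf
  · exact (Set.Nonempty.subset_singleton_iff hinf.nonempty).1 hXA

theorem IsMinimalInfiniteEmitter.exists_subset {C : Set V} (hC : G.IsMinimalInfiniteEmitter C)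
    {ι : Type*} [Finite ι] {A : ι → Set V} (hA : ∀ i, G.G0 (A i)) (hCA : C ⊆ ⋃ i, A i) :
    ∃ i, C ⊆ A i := by
  have hcover : G.eps C ⊆ ⋃ i, G.eps (C ∩ A i) := fun e he =>
    Set.mem_iUnion.2 ((Set.mem_iUnion.1 (hCA he)).imp fun _ hi => ⟨he, hi⟩)
  obtain ⟨i, hi⟩ : ∃ i, G.IsInfiniteEmitter (C ∩ A i) := by
    by_contra! h
    exact hC.2.1 ((Set.finite_iUnion fun i => Set.not_infinite.1 (h i)).subset hcover)
  exact ⟨i, hC.2.2 _ (G.G0_inter hC.1 (hA i)) Set.inter_subset_left hi ▸ Set.inter_subset_right⟩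

variable {M : E → ℝ≥0∞} {m : Set V → ℝ≥0∞}

/-- The pieces of `r(e)` given by (RFUM) meet in sets emitting finitely many edges, the pieces
with a defect are minimal infinite emitters, and every minimal infinite emitter inside `r(e)` is
one of the pieces. -/
theorem IsWeightSystem.tsum_indicator_defect_mie (hw : G.IsWeightSystem M m) (hrfum : G.RFUM)
    (e : E) :
    ∑' A, {A | G.IsMinimalInfiniteEmitter A ∧ A ⊆ G.r e}.indicator (G.defect M m) A =
      G.defect M m (G.r e) := by
  obtain ⟨n, A, hre, hA⟩ := hrfum e
  have hA0 : ∀ i, G.G0 (A i) := fun i => (hA i).elim (·.1) fun ⟨v, hv⟩ => hv ▸ G0.vertex v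
  set P := Finset.univ.image A with hP
  have hP0 : ∀ p ∈ P, G.G0 p := by simp [hP, hA0]
  have hPmin : ∀ p ∈ P, ∀ X, G.G0 X → X ⊆ p → G.IsInfiniteEmitter X → X = p := by
    simp only [hP, Finset.mem_image, Finset.mem_univ, true_and]
    rintro _ ⟨i, rfl⟩ X hX hXA hinf
    exact eq_of_subset_of_mie_or_singleton (hA i) hX hXA hinf
  have hpair : (P : Set (Set V)).Pairwise fun p q => (G.eps (p ∩ q)).Finite := by
    intro p hp q hq hpq
    by_contra hinf
    have hpq0 := G.G0_inter (hP0 p hp) (hP0 q hq)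
    exact hpq ((hPmin p hp _ hpq0 Set.inter_subset_left hinf).symm.trans
      (hPmin q hq _ hpq0 Set.inter_subset_right hinf))
  have hU : ⋃ p ∈ P, p = G.r e := by simp [hP, hre]
  have hmie : {A | G.IsMinimalInfiniteEmitter A ∧ A ⊆ G.r e} =
      ↑(P.filter G.IsMinimalInfiniteEmitter) := by
    ext C
    simp only [Set.mem_ofPred_eq, Finset.coe_filter]
    refine ⟨fun ⟨hC, hCr⟩ => ⟨?_, hC⟩,
      fun ⟨hCP, hC⟩ => ⟨hC, hU ▸ Set.subset_biUnion_of_mem (u := id) hCP⟩⟩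
    obtain ⟨i, hi⟩ := hC.exists_subset hA0 (hre ▸ hCr)
    have hAi : A i ∈ P := Finset.mem_image_of_mem A (Finset.mem_univ i)
    exact hPmin _ hAi C hC.1 hi hC.2.1 ▸ hAi
  rw [hmie, ← sum_eq_tsum_indicator, ← hU, hw.defect_biUnion hP0 hpair]
  refine Finset.sum_subset (Finset.filter_subset _ _) fun p hp hnp => ?_
  refine hw.defect_eq_zero_of_finite (hP0 p hp) (Set.not_infinite.1 fun hinf => hnp ?_)
  exact Finset.mem_filter.2 ⟨hp, hP0 p hp, hinf, fun X hX hXp hXinf => hPmin p hp X hX hXp hXinf⟩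

end

section

variable {V E : Type*} (G : Ultragraph V E)

noncomputable def pathWeight (M : E → ℝ≥0∞) (α : List E) : ℝ≥0∞ := (α.map M).prod

@[simp] theorem pathWeight_concat (M : E → ℝ≥0∞) (α : List E) (e : E) :
    pathWeight M (α ++ [e]) = pathWeight M α * M e := by
  simp [pathWeight]

def lastRange (α : List E) : Set V :=
  match α.getLast? with
  | some e => G.r e
  | none => ∅

@[simp] theorem lastRange_concat (α : List E) (e : E) : G.lastRange (α ++ [e]) = G.r e := by
  simp [lastRange]

theorem lastRange_of_ne_nil {α : List E} (h : α ≠ []) : G.lastRange α = G.r (α.getLast h) := by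
  simp [lastRange, List.getLast?_eq_some_getLast h]

theorem G0_lastRange {α : List E} (h : α ≠ []) : G.G0 (G.lastRange α) :=
  G.lastRange_of_ne_nil h ▸ G0.range _

theorem isPath_concat_iff {α : List E} {e : E} :
    G.IsPath (α ++ [e]) ↔ G.IsPath α ∧ (α ≠ [] → G.s e ∈ G.lastRange α) := by
  change List.IsChain _ _ ↔ List.IsChain _ _ ∧ _
  rcases eq_or_ne α [] with rfl | hα
  · simp
  · simp [List.isChain_append, List.getLast?_eq_some_getLast hα,
      lastRange_of_ne_nil G hα, hα]

/-- The paths longer than `β` whose cylinders lie in `D_{(β,B),F}`. -/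
def ExtendsThrough (β : List E) (B : Set V) (F : Set E) (α : List E) : Prop :=
  G.IsPath α ∧ β.length < α.length ∧ α.take β.length = β ∧
    ∃ e, α[β.length]? = some e ∧ G.s e ∈ B ∧ e ∉ F

variable {G}

theorem ExtendsThrough.ne_nil {β α : List E} {B : Set V} {F : Set E}
    (h : G.ExtendsThrough β B F α) : α ≠ [] := by
  rintro rfl
  exact Nat.not_lt_zero _ h.2.1

theorem extendsThrough_concat_iff {β α : List E} {B : Set V} {F : Set E} {e : E}
    (hlen : β.length < α.length) :
    G.ExtendsThrough β B F (α ++ [e]) ↔ G.ExtendsThrough β B F α ∧ G.s e ∈ G.lastRange α := by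
  have hne : α ≠ [] := List.ne_nil_of_length_pos (by omega)
  simp only [ExtendsThrough, isPath_concat_iff G, List.take_append_of_le_length hlen.le,
    List.getElem?_append_left hlen, List.length_append, List.length_singleton]
  constructor
  · rintro ⟨⟨hα, he⟩, -, rest⟩
    exact ⟨⟨hα, hlen, rest⟩, he hne⟩
  · rintro ⟨⟨hα, -, rest⟩, he⟩
    exact ⟨⟨hα, fun _ => he⟩, by omega, rest⟩

theorem extendsThrough_concat_iff_of_length_eq {β α : List E} {B : Set V} {F : Set E} {e : E}
    (hβ : G.IsUPath β B) (hlen : α.length = β.length) :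
    G.ExtendsThrough β B F (α ++ [e]) ↔ α = β ∧ G.s e ∈ B ∧ e ∉ F := by
  simp only [ExtendsThrough, ← hlen, List.take_left, List.getElem?_concat_length,
    Option.some.injEq, exists_eq_left', List.length_append, List.length_singleton]
  constructor
  · rintro ⟨-, -, rfl, he⟩
    exact ⟨rfl, he⟩
  · rintro ⟨rfl, he⟩
    refine ⟨(isPath_concat_iff G).2 ⟨hβ.1, fun h => ?_⟩, by omega, rfl, he⟩
    rw [lastRange_of_ne_nil G h]
    exact hβ.2.2.2 h he.1

end

section

variable {V E : Type*} (G : Ultragraph V E) (M : E → ℝ≥0∞) (m : Set V → ℝ≥0∞)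

noncomputable def levelMass (β : List E) (B : Set V) (F : Set E) (ℓ : ℕ) : ℝ≥0∞ :=
  ∑' α, if G.ExtendsThrough β B F α ∧ α.length = ℓ then
    pathWeight M α * m (G.lastRange α) else 0

noncomputable def kappa (β : List E) (B : Set V) (F : Finset E) : ℝ≥0∞ :=
  pathWeight M β * (m B - ∑ e ∈ F, M e * m (G.r e))

theorem emission_eq_sum_add {B : Set V} {F : Finset E} (hF : (F : Set E) ⊆ G.eps B) :
    G.emission M m B = ∑ e ∈ F, M e * m (G.r e) +
      ∑' e, (G.eps B \ F).indicator (fun e => M e * m (G.r e)) e := by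
  rw [emission, sum_eq_tsum_indicator, ← ENNReal.tsum_add, ← Set.union_sdiff_cancel hF]
  refine tsum_congr fun e => ?_
  rw [Set.indicator_union_of_disjoint Set.disjoint_sdiff_right, Set.union_sdiff_cancel hF]

variable {G M m}

theorem levelMass_length_succ {β : List E} {B : Set V} {F : Set E} (hβ : G.IsUPath β B) :
    G.levelMass M m β B F (β.length + 1) =
      pathWeight M β * ∑' e, (G.eps B \ F).indicator (fun e => M e * m (G.r e)) e := by
  rw [levelMass, ← ENNReal.tsum_tsum_append_singleton _ (by simp), ← ENNReal.tsum_mul_left]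
  have hα : ∀ α : List E, (∑' e, if G.ExtendsThrough β B F (α ++ [e]) ∧
      (α ++ [e]).length = β.length + 1 then
        pathWeight M (α ++ [e]) * m (G.lastRange (α ++ [e])) else 0) =
      if α = β then ∑' e, pathWeight M β *
        (G.eps B \ F).indicator (fun e => M e * m (G.r e)) e else 0 := by
    intro α
    by_cases hlen : α.length = β.length
    · simp only [extendsThrough_concat_iff_of_length_eq hβ hlen, List.length_append,
        List.length_singleton, hlen, and_true]
      split_ifs with h
      · subst h
        refine tsum_congr fun e => ?_
        simp only [true_and, Set.indicator_apply, Set.mem_sdiff, eps, Set.mem_ofPred_eq]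
        split_ifs <;> simp [mul_assoc]
      · simp [h]
    · have : α ≠ β := fun h => hlen (h ▸ rfl)
      simp [hlen, this]
  simp only [hα, tsum_ite_eq]

theorem levelMass_succ_eq {β : List E} {B : Set V} {F : Set E} {ℓ : ℕ} (hℓ : β.length < ℓ) :
    G.levelMass M m β B F (ℓ + 1) = ∑' α, if G.ExtendsThrough β B F α ∧ α.length = ℓ then
      pathWeight M α * G.emission M m (G.lastRange α) else 0 := by
  rw [levelMass, ← ENNReal.tsum_tsum_append_singleton _ (by simp)]
  refine tsum_congr fun α => ?_
  by_cases hα : α.length = ℓ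
  · simp only [List.length_append, List.length_singleton, hα, and_true,
      extendsThrough_concat_iff (hα ▸ hℓ), emission, ← ENNReal.tsum_mul_left]
    by_cases h : G.ExtendsThrough β B F α
    · simp only [h, true_and, if_true]
      refine tsum_congr fun e => ?_
      simp only [Set.indicator_apply, eps, Set.mem_ofPred_eq]
      split_ifs <;> simp [mul_assoc]
    · simp [h]
  · simp [hα]

namespace IsWeightSystem

variable (hw : G.IsWeightSystem M m)
include hw

theorem levelMass_succ {β : List E} {B : Set V} {F : Set E} {ℓ : ℕ} (hℓ : β.length < ℓ) :
    G.levelMass M m β B F ℓ = G.levelMass M m β B F (ℓ + 1) +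
      ∑' α, if G.ExtendsThrough β B F α ∧ α.length = ℓ then
        pathWeight M α * G.defect M m (G.lastRange α) else 0 := by
  rw [levelMass_succ_eq hℓ, levelMass, ← ENNReal.tsum_add]
  refine tsum_congr fun α => ?_
  split_ifs with h
  · rw [← mul_add, hw.emission_add_defect (G.G0_lastRange h.1.ne_nil)]
  · rw [add_zero]

theorem kappa_eq_add_levelMass_length_succ {β : List E} {B : Set V} {F : Finset E}
    (hβ : G.IsUPath β B) (hF : (F : Set E) ⊆ G.eps B) :
    G.kappa M m β B F =
      pathWeight M β * G.defect M m B + G.levelMass M m β B F (β.length + 1) := by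
  have hsum : ∑ e ∈ F, M e * m (G.r e) ≠ ∞ :=
    ne_top_of_le_ne_top (hw.ne_top B hβ.2.1) (hw.sum_le B hβ.2.1 F hF)
  rw [kappa, levelMass_length_succ hβ, ← mul_add, ← hw.emission_add_defect hβ.2.1,
    emission_eq_sum_add G M m hF, add_assoc, ENNReal.add_sub_cancel_left hsum, add_comm]

theorem kappa_eq_add_levelMass {β : List E} {B : Set V} {F : Finset E} (hβ : G.IsUPath β B)
    (hF : (F : Set E) ⊆ G.eps B) {ℓ : ℕ} (hℓ : β.length < ℓ) :
    G.kappa M m β B F = pathWeight M β * G.defect M m B +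
      (∑' α, if G.ExtendsThrough β B F α ∧ α.length < ℓ then
        pathWeight M α * G.defect M m (G.lastRange α) else 0) + G.levelMass M m β B F ℓ := by
  induction ℓ, hℓ using Nat.le_induction with
  | base =>
    rw [hw.kappa_eq_add_levelMass_length_succ hβ hF, ENNReal.tsum_eq_zero.2, add_zero]
    intro α
    rw [if_neg]
    rintro ⟨hα, hlen⟩
    exact absurd hα.2.1 (by omega)
  | succ ℓ hℓ ih =>
    have hsplit : (∑' α, if G.ExtendsThrough β B F α ∧ α.length < ℓ + 1 then
        pathWeight M α * G.defect M m (G.lastRange α) else 0) =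
        (∑' α, if G.ExtendsThrough β B F α ∧ α.length < ℓ then
          pathWeight M α * G.defect M m (G.lastRange α) else 0) +
        ∑' α, if G.ExtendsThrough β B F α ∧ α.length = ℓ then
          pathWeight M α * G.defect M m (G.lastRange α) else 0 := by
      rw [← ENNReal.tsum_add]
      refine tsum_congr fun α => ?_
      by_cases h : G.ExtendsThrough β B F α
      · rcases lt_trichotomy α.length ℓ with hlt | heq | hgt
        · simp [h, hlt, hlt.ne, Nat.lt_succ_of_lt hlt]
        · simp [h, heq]
        · simp [h, hgt.ne', not_lt.2 hgt.le, not_lt.2 (Nat.succ_le_of_lt hgt)]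
      · simp [h]
    rw [ih, hw.levelMass_succ hℓ, hsplit]
    ring

end IsWeightSystem

end

section

variable {V E : Type*} (G : Ultragraph V E) (M : E → ℝ≥0∞) (m : Set V → ℝ≥0∞)

noncomputable def pointWeight (ℓ : ℕ) : Pt V E → ℝ≥0∞
  | .fin α A => if α.length < ℓ then pathWeight M α * G.defect M m A else 0
  | .inf _ => 0

theorem tsum_SSp_eq_tsum_fin (f : Pt V E → ℝ≥0∞) (hf : ∀ γ, f (.inf γ) = 0) :
    ∑' x : G.SSp, f x.val = ∑' α, ∑' A, if G.IsPt (.fin α A) then f (.fin α A) else 0 := by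
  have hinj : Function.Injective fun p : List E × Set V => Pt.fin p.1 p.2 :=
    fun p q h => Prod.ext (Pt.fin.inj h).1 (Pt.fin.inj h).2
  have hsupp : Function.support ({x | G.IsPt x}.indicator f) ⊆
      Set.range fun p : List E × Set V => Pt.fin p.1 p.2 := by
    rintro (⟨α, A⟩ | γ) hx
    · exact ⟨(α, A), rfl⟩
    · exact absurd (Set.indicator_apply_eq_zero.2 fun _ => hf γ) hx
  calc ∑' x : G.SSp, f x.val = ∑' x : {x | G.IsPt x}, f x := rfl
    _ = ∑' p : List E × Set V, {x | G.IsPt x}.indicator f (.fin p.1 p.2) :=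
      (tsum_subtype _ f).trans (hinj.tsum_eq hsupp).symm
    _ = _ := by
      rw [ENNReal.tsum_prod']
      simp only [Set.indicator_apply, Set.mem_ofPred_eq]

variable {G M m}

theorem inDF_fin_iff {α β : List E} {A B : Set V} {F : Set E} :
    G.inDF β B F (.fin α A) ↔
      (α = β ∧ A = B) ∨ (β.length < α.length ∧ α.take β.length = β ∧
        ∃ e, α[β.length]? = some e ∧ G.s e ∈ B ∧ e ∉ F) := by
  change ((α = β ∧ A = B) ∨ (α.take β.length = β ∧
      ∃ e, (α.drop β.length).head? = some e ∧ G.s e ∈ B ∧ e ∉ F)) ↔ _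
  rw [List.head?_drop]
  constructor
  · rintro (h | ⟨h1, e, h2, h3⟩)
    · exact Or.inl h
    · exact Or.inr ⟨(List.getElem?_eq_some_iff.1 h2).1, h1, e, h2, h3⟩
  · rintro (h | ⟨-, h⟩)
    · exact Or.inl h
    · exact Or.inr h

theorem inDF_fin_iff_extendsThrough {α β : List E} {A B : Set V} {F : Set E} (hαβ : α ≠ β)
    (hα : G.IsPath α) : G.inDF β B F (.fin α A) ↔ G.ExtendsThrough β B F α := by
  rw [inDF_fin_iff, ExtendsThrough]
  simp [hαβ, hα]

theorem ValidCyl.subset_eps {β : List E} {B : Set V} {F : Finset E} (hv : G.ValidCyl β B F) :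
    (F : Set E) ⊆ G.eps B :=
  hv.2.elim (·.2) fun h => by simp [h.2]

theorem ValidCyl.defect_eq_zero_of_not_mie {β : List E} {B : Set V} {F : Finset E}
    (hv : G.ValidCyl β B F) (hw : G.IsWeightSystem M m) (hB : ¬ G.IsMinimalInfiniteEmitter B) :
    G.defect M m B = 0 :=
  hv.2.elim (fun h => absurd h.1 hB) fun h => hw.defect_eq_zero_of_finite hv.1.2.1 h.1

theorem tsum_pointWeight_fin_self {β : List E} {B : Set V} {F : Finset E} {ℓ : ℕ}
    (hw : G.IsWeightSystem M m) (hv : G.ValidCyl β B F) (hℓ : β.length < ℓ) :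
    ∑' A, (if G.IsPt (.fin β A) ∧ G.inDF β B F (.fin β A) then
      G.pointWeight M m ℓ (.fin β A) else 0) = pathWeight M β * G.defect M m B := by
  have hA : ∀ A, G.IsPt (.fin β A) ∧ G.inDF β B F (.fin β A) ↔
      A = B ∧ G.IsMinimalInfiniteEmitter B := by
    intro A
    simp only [inDF_fin_iff, lt_irrefl, false_and, or_false, true_and]
    exact ⟨fun ⟨h, hAB⟩ => ⟨hAB, hAB ▸ h.2.1⟩,
      fun ⟨hAB, hB⟩ => ⟨hAB ▸ ⟨hv.1.1, hB, hv.1.2.2.2⟩, hAB⟩⟩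
  simp only [hA, ite_and, pointWeight, hℓ, if_true, tsum_ite_eq]
  split_ifs with hB
  · rfl
  · rw [hv.defect_eq_zero_of_not_mie hw hB, mul_zero]

theorem tsum_pointWeight_fin_of_ne {α β : List E} {B : Set V} {F : Set E} {ℓ : ℕ}
    (hw : G.IsWeightSystem M m) (hrfum : G.RFUM) (hαβ : α ≠ β) :
    ∑' A, (if G.IsPt (.fin α A) ∧ G.inDF β B F (.fin α A) then
      G.pointWeight M m ℓ (.fin α A) else 0) =
      if G.ExtendsThrough β B F α ∧ α.length < ℓ then
        pathWeight M α * G.defect M m (G.lastRange α) else 0 := by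
  have hA : ∀ A, G.IsPt (.fin α A) ∧ G.inDF β B F (.fin α A) ↔
      G.ExtendsThrough β B F α ∧ (G.IsMinimalInfiniteEmitter A ∧ A ⊆ G.lastRange α) := by
    intro A
    refine ⟨fun ⟨hpt, hD⟩ => ?_, fun ⟨hext, hA, hAr⟩ => ?_⟩
    · have hext := (inDF_fin_iff_extendsThrough hαβ hpt.1).1 hD
      exact ⟨hext, hpt.2.1, G.lastRange_of_ne_nil hext.ne_nil ▸ hpt.2.2 hext.ne_nil⟩
    · refine ⟨⟨hext.1, hA, fun h => G.lastRange_of_ne_nil h ▸ hAr⟩, ?_⟩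
      exact (inDF_fin_iff_extendsThrough hαβ hext.1).2 hext
  simp only [hA, pointWeight]
  by_cases hext : G.ExtendsThrough β B F α
  · by_cases hlen : α.length < ℓ
    · rw [if_pos ⟨hext, hlen⟩, G.lastRange_of_ne_nil hext.ne_nil,
        ← hw.tsum_indicator_defect_mie hrfum, ← ENNReal.tsum_mul_left]
      refine tsum_congr fun A => ?_
      simp [Set.indicator_apply, hext, hlen]
    · simp [hlen]
  · simp [hext]

theorem tsum_indicator_DF_pointWeight {β : List E} {B : Set V} {F : Finset E} {ℓ : ℕ}
    (hw : G.IsWeightSystem M m) (hrfum : G.RFUM) (hv : G.ValidCyl β B F)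
    (hℓ : β.length < ℓ) :
    ∑' x, (G.DF β B F).indicator (fun x => G.pointWeight M m ℓ x.val) x =
      pathWeight M β * G.defect M m B +
        ∑' α, if G.ExtendsThrough β B F α ∧ α.length < ℓ then
          pathWeight M α * G.defect M m (G.lastRange α) else 0 := by
  let f : Pt V E → ℝ≥0∞ := fun y => if G.inDF β B F y then G.pointWeight M m ℓ y else 0
  have hind : ∀ x : G.SSp, (G.DF β B F).indicator (fun x => G.pointWeight M m ℓ x.val) x =
      f x.val := fun x => rfl
  refine (tsum_congr hind).trans <|
    (G.tsum_SSp_eq_tsum_fin f fun γ => by simp [f, pointWeight]).trans ?_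
  rw [← tsum_ite_eq β fun _ => pathWeight M β * G.defect M m B, ← ENNReal.tsum_add]
  refine tsum_congr fun α => ?_
  simp only [f, ← ite_and]
  rcases eq_or_ne α β with rfl | hαβ
  · rw [tsum_pointWeight_fin_self hw hv hℓ, if_pos rfl, if_neg fun h => lt_irrefl _ h.1.2.1,
      add_zero]
  · rw [tsum_pointWeight_fin_of_ne hw hrfum hαβ, if_neg hαβ, zero_add]

theorem IsWeightSystem.kappa_eq_tsum_pointWeight_add_levelMass {β : List E} {B : Set V}
    {F : Finset E} {ℓ : ℕ} (hw : G.IsWeightSystem M m) (hrfum : G.RFUM) (hv : G.ValidCyl β B F)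
    (hℓ : β.length < ℓ) :
    G.kappa M m β B F = ∑' x, (G.DF β B F).indicator (fun x => G.pointWeight M m ℓ x.val) x +
      G.levelMass M m β B F ℓ := by
  rw [hw.kappa_eq_add_levelMass hv.1 hv.subset_eps hℓ, tsum_indicator_DF_pointWeight hw hrfum hv hℓ]

end

section

variable {V E : Type*} {G : Ultragraph V E}

theorem exists_isPt_inf_extending (hns : G.NoSinks) {α : List E} (hα : G.IsPath α)
    (hne : α ≠ []) : ∃ γ : ℕ → E, G.IsPt (.inf γ) ∧ ∀ k (h : k < α.length), γ k = α[k] := by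
  choose next hnext using fun e : E =>
    let ⟨v, hv⟩ := G.r_nonempty e
    let ⟨f, hf⟩ := hns v
    (⟨f, hf ▸ hv⟩ : ∃ f, G.s f ∈ G.r e)
  let γ : ℕ → E := fun n =>
    if h : n < α.length then α[n] else next^[n + 1 - α.length] (α.getLast hne)
  have hγ : ∀ k (h : k < α.length), γ k = α[k] := fun k h => dif_pos h
  have hpos := List.length_pos_iff.2 hne
  refine ⟨γ, fun n => ?_, hγ⟩
  by_cases hn : n + 1 < α.length
  · rw [hγ _ hn, hγ n (by omega)]
    exact List.isChain_iff_getElem.1 hα n hn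
  · have hγn : γ n = next^[n + 1 - α.length] (α.getLast hne) := by
      by_cases h : n < α.length
      · rw [hγ n h, show n + 1 - α.length = 0 by omega, Function.iterate_zero, id,
          List.getLast_eq_getElem]
        congr 1
        omega
      · exact dif_neg h
    have hγn1 : γ (n + 1) = next (γ n) := by
      rw [hγn, ← Function.iterate_succ_apply' next]
      exact (dif_neg hn).trans (congrArg (next^[·] _) (by omega))
    rw [hγn1]
    exact hnext _

theorem inDF_inf_iff {γ : ℕ → E} {α β : List E} {B : Set V} {F : Set E}
    (hγ : ∀ k (h : k < α.length), γ k = α[k]) (hα : G.IsPath α) (hlen : β.length < α.length) :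
    G.inDF β B F (.inf γ) ↔ G.ExtendsThrough β B F α := by
  have htake : (∀ i : Fin β.length, γ i = β.get i) ↔ α.take β.length = β := by
    rw [List.ext_getElem_iff]
    simp only [List.length_take, List.getElem_take, List.get_eq_getElem, Fin.forall_iff]
    constructor
    · intro h
      exact ⟨by omega, fun i hi _ => (hγ i (by omega)).symm.trans (h i (by omega))⟩
    · intro ⟨_, h⟩ i hi
      exact (hγ i (by omega)).trans (h i (by omega) hi)
  change (_ ∧ _ ∧ _) ↔ _
  rw [htake, hγ _ hlen, ExtendsThrough]
  simp [hα, hlen]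

theorem levelMass_eq_sum_of_iUnion (M : E → ℝ≥0∞) (m : Set V → ℝ≥0∞) (hns : G.NoSinks)
    {ι : Type*} [Fintype ι] {β : List E} {B : Set V} {F : Set E} {βi : ι → List E}
    {Bi : ι → Set V} {Fi : ι → Set E}
    (hdisj : Pairwise (Disjoint on fun i => G.DF (βi i) (Bi i) (Fi i)))
    (hcover : G.DF β B F = ⋃ i, G.DF (βi i) (Bi i) (Fi i)) {ℓ : ℕ} (hℓ : β.length < ℓ)
    (hℓi : ∀ i, (βi i).length < ℓ) :
    G.levelMass M m β B F ℓ = ∑ i, G.levelMass M m (βi i) (Bi i) (Fi i) ℓ := by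
  simp only [levelMass]
  rw [← Summable.tsum_finsetSum fun _ _ => ENNReal.summable]
  refine tsum_congr fun α => ?_
  by_cases hα : G.IsPath α ∧ α.length = ℓ
  · obtain ⟨hpath, rfl⟩ := hα
    obtain ⟨γ, hγpt, hγ⟩ :=
      exists_isPt_inf_extending hns hpath (List.ne_nil_of_length_pos (by omega))
    let x : G.SSp := ⟨.inf γ, hγpt⟩
    have hx : ∀ {β' : List E} {B' : Set V} {F' : Set E}, β'.length < α.length →
        (G.ExtendsThrough β' B' F' α ↔ x ∈ G.DF β' B' F') :=
      fun h => (inDF_inf_iff hγ hpath h).symm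
    simp only [and_true, hx hℓ, hx (hℓi _), hcover]
    simpa only [Set.indicator_apply] using Set.indicator_iUnion_apply_of_pairwise_disjoint hdisj
      (fun _ => pathWeight M α * m (G.lastRange α)) x
  · have hno : ∀ {β' : List E} {B' : Set V} {F' : Set E},
        ¬ (G.ExtendsThrough β' B' F' α ∧ α.length = ℓ) := fun h => hα ⟨h.1.1, h.2⟩
    simp only [if_neg hno, Finset.sum_const_zero]

end

section

variable {V E : Type*} {G : Ultragraph V E} {M : E → ℝ} {m : Set V → ℝ}

theorem ofReal_sum_mul (hM : ∀ e, 0 ≤ M e) (hr : ∀ e, 0 ≤ m (G.r e)) (F : Finset E) :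
    ENNReal.ofReal (∑ e ∈ F, M e * m (G.r e)) =
      ∑ e ∈ F, ENNReal.ofReal (M e) * ENNReal.ofReal (m (G.r e)) := by
  rw [ENNReal.ofReal_sum_of_nonneg fun e _ => mul_nonneg (hM e) (hr e)]
  exact Finset.sum_congr rfl fun e _ => ENNReal.ofReal_mul (hM e)

theorem isWeightSystem_ofReal (hM : ∀ e, 0 ≤ M e) (hm : ∀ A, G.G0 A → 0 ≤ m A)
    (hm2 : ∀ A, G.G0 A → ∀ hfin : (G.eps A).Finite,
      m A = ∑ e ∈ hfin.toFinset, M e * m (G.r e))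
    (hm3 : ∀ A, G.G0 A → ∀ F : Finset E, (F : Set E) ⊆ G.eps A →
      ∑ e ∈ F, M e * m (G.r e) ≤ m A)
    (hm4 : ∀ A B, G.G0 A → G.G0 B → m (A ∪ B) = m A + m B - m (A ∩ B)) :
    G.IsWeightSystem (fun e => ENNReal.ofReal (M e)) (fun A => ENNReal.ofReal (m A)) where
  ne_top _ _ := ENNReal.ofReal_ne_top
  eq_sum_of_finite A hA hfin := by
    rw [hm2 A hA hfin, ofReal_sum_mul hM fun e => hm _ (G0.range e)]
  sum_le A hA F hF := by
    rw [← ofReal_sum_mul hM fun e => hm _ (G0.range e)]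
    exact ENNReal.ofReal_le_ofReal (hm3 A hA F hF)
  union_add_inter A B hA hB := by
    rw [← ENNReal.ofReal_add (hm _ (G0.union hA hB)) (hm _ (G.G0_inter hA hB)),
      ← ENNReal.ofReal_add (hm A hA) (hm B hB), hm4 A B hA hB, sub_add_cancel]

theorem Mext_nonneg (hM : ∀ e, 0 ≤ M e) (l : List E) : 0 ≤ Mext M l :=
  List.prod_nonneg fun _ hx => let ⟨e, _, he⟩ := List.mem_map.1 hx; he ▸ hM e

theorem ofReal_Mext (hM : ∀ e, 0 ≤ M e) (l : List E) :
    ENNReal.ofReal (Mext M l) = pathWeight (fun e => ENNReal.ofReal (M e)) l := by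
  induction l with
  | nil => simp [Mext, pathWeight]
  | cons e l ih =>
    simp only [Mext, pathWeight, List.map_cons, List.prod_cons] at ih ⊢
    rw [ENNReal.ofReal_mul (hM e), ih]

theorem kappaForm_eq_mul (β : List E) (B : Set V) (F : Finset E) :
    G.kappaForm M m β B F = Mext M β * (m B - ∑ e ∈ F, M e * m (G.r e)) := by
  simp only [kappaForm, mul_sub, Finset.mul_sum, mul_assoc]

theorem kappaForm_nonneg (hM : ∀ e, 0 ≤ M e) {β : List E} {B : Set V} {F : Finset E}
    (hF : ∑ e ∈ F, M e * m (G.r e) ≤ m B) : 0 ≤ G.kappaForm M m β B F := by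
  rw [kappaForm_eq_mul]
  exact mul_nonneg (Mext_nonneg hM β) (sub_nonneg.2 hF)

theorem ofReal_kappaForm (hM : ∀ e, 0 ≤ M e) (hr : ∀ e, 0 ≤ m (G.r e)) (β : List E) (B : Set V)
    (F : Finset E) :
    ENNReal.ofReal (G.kappaForm M m β B F) =
      G.kappa (fun e => ENNReal.ofReal (M e)) (fun A => ENNReal.ofReal (m A)) β B F := by
  rw [kappaForm_eq_mul, ENNReal.ofReal_mul (Mext_nonneg hM β),
    ENNReal.ofReal_sub _ (Finset.sum_nonneg fun e _ => mul_nonneg (hM e) (hr e)),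
    ofReal_sum_mul hM hr, ofReal_Mext hM, kappa]

end

end Ultragraph

open Ultragraph
open scoped ENNReal

theorem stmt7_general {V E : Type*} (G : Ultragraph V E)
    (hns : G.NoSinks) (hrfum : G.RFUM)
    (M : E → ℝ) (hM : ∀ e, M e ∈ Set.Icc (0 : ℝ) 1)
    (m : Set V → ℝ) (hm : ∀ A, G.G0 A → m A ∈ Set.Icc (0 : ℝ) 1)
    (hm2 : ∀ A, G.G0 A → ∀ hfin : (G.eps A).Finite,
      m A = ∑ e ∈ hfin.toFinset, M e * m (G.r e))
    (hm3 : ∀ A, G.G0 A → ∀ F : Finset E, (F : Set E) ⊆ G.eps A →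
      ∑ e ∈ F, M e * m (G.r e) ≤ m A)
    (hm4 : ∀ A B, G.G0 A → G.G0 B → m (A ∪ B) = m A + m B - m (A ∩ B))
    (β : List E) (B : Set V) (F : Finset E) (hval : G.ValidCyl β B F)
    (n : ℕ) (βi : Fin n → List E) (Bi : Fin n → Set V) (Fi : Fin n → Finset E)
    (hvali : ∀ i, G.ValidCyl (βi i) (Bi i) (Fi i))
    (hdisj : ∀ i j, i ≠ j →
      Disjoint (G.DF (βi i) (Bi i) (Fi i)) (G.DF (βi j) (Bi j) (Fi j)))
    (hcover : G.DF β B (F : Set E) = ⋃ i, G.DF (βi i) (Bi i) (Fi i)) :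
    G.kappaForm M m β B F = ∑ i, G.kappaForm M m (βi i) (Bi i) (Fi i) := by
  let M' : E → ℝ≥0∞ := fun e => ENNReal.ofReal (M e)
  let m' : Set V → ℝ≥0∞ := fun A => ENNReal.ofReal (m A)
  have hM0 : ∀ e, 0 ≤ M e := fun e => (hM e).1
  have hr0 : ∀ e, 0 ≤ m (G.r e) := fun e => (hm _ (G0.range e)).1
  have hw : G.IsWeightSystem M' m' :=
    isWeightSystem_ofReal hM0 (fun A hA => (hm A hA).1) hm2 hm3 hm4
  have hnonneg : ∀ {β' B' F'}, G.ValidCyl β' B' F' → 0 ≤ G.kappaForm M m β' B' F' :=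
    fun hv => kappaForm_nonneg hM0 (hm3 _ hv.1.2.1 _ hv.subset_eps)
  obtain ⟨ℓ, hℓ, hℓi⟩ : ∃ ℓ, β.length < ℓ ∧ ∀ i, (βi i).length < ℓ :=
    ⟨β.length + ∑ i, (βi i).length + 1, by omega, fun i => by
      have := Finset.single_le_sum (fun j _ => Nat.zero_le (βi j).length) (Finset.mem_univ i)
      omega⟩
  have hsplit : ∀ {β' B' F'}, G.ValidCyl β' B' F' → β'.length < ℓ →
      ENNReal.ofReal (G.kappaForm M m β' B' F') =
        ∑' x, (G.DF β' B' F').indicator (fun x => G.pointWeight M' m' ℓ x.val) x +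
          G.levelMass M' m' β' B' F' ℓ := fun hv hℓ' => by
    rw [ofReal_kappaForm hM0 hr0, hw.kappa_eq_tsum_pointWeight_add_levelMass hrfum hv hℓ']
  rw [← ENNReal.ofReal_eq_ofReal_iff (hnonneg hval)
      (Finset.sum_nonneg fun i _ => hnonneg (hvali i)),
    ENNReal.ofReal_sum_of_nonneg fun i _ => hnonneg (hvali i), hsplit hval hℓ,
    levelMass_eq_sum_of_iUnion M' m' hns hdisj hcover hℓ hℓi, hcover,
    ENNReal.tsum_indicator_iUnion hdisj, ← Finset.sum_add_distrib]
  exact Finset.sum_congr rfl fun i _ => (hsplit (hvali i) (hℓi i)).symm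

/-- Under (m2'), (m3'), (m4'), the premeasure
`κ(D_{(β,B),F}) = M(β) m(B) − ∑_{e ∈ F} M(βe) m(r(e))` is finitely additive on the
semi-ring of generalized cylinder sets: if `D_{(β,B),F}` is a finite disjoint union of
cylinders `D_{(βᵢ,Bᵢ),Fᵢ}` then `κ(D_{(β,B),F}) = ∑ᵢ κ(D_{(βᵢ,Bᵢ),Fᵢ})`. -/
theorem stmt7 {V E : Type*} [Countable V] [Countable E] (G : Ultragraph V E)
    (hns : G.NoSinks) (hrfum : G.RFUM)
    (M : E → ℝ) (hM : ∀ e, M e ∈ Set.Icc (0 : ℝ) 1)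
    (m : Set V → ℝ) (hm : ∀ A, G.G0 A → m A ∈ Set.Icc (0 : ℝ) 1)
    (hm2 : ∀ A, G.G0 A → ∀ hfin : (G.eps A).Finite,
      m A = ∑ e ∈ hfin.toFinset, M e * m (G.r e))
    (hm3 : ∀ A, G.G0 A → ∀ F : Finset E, (F : Set E) ⊆ G.eps A →
      ∑ e ∈ F, M e * m (G.r e) ≤ m A)
    (hm4 : ∀ A B, G.G0 A → G.G0 B → m (A ∪ B) = m A + m B - m (A ∩ B))
    (β : List E) (B : Set V) (F : Finset E) (hval : G.ValidCyl β B F)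
    (n : ℕ) (βi : Fin n → List E) (Bi : Fin n → Set V) (Fi : Fin n → Finset E)
    (hvali : ∀ i, G.ValidCyl (βi i) (Bi i) (Fi i))
    (hdisj : ∀ i j, i ≠ j →
      Disjoint (G.DF (βi i) (Bi i) (Fi i)) (G.DF (βi j) (Bi j) (Fi j)))
    (hcover : G.DF β B (F : Set E) = ⋃ i, G.DF (βi i) (Bi i) (Fi i)) :
    G.kappaForm M m β B F = ∑ i, G.kappaForm M m (βi i) (Bi i) (Fi i) :=
  stmt7_general G hns hrfum M hM m hm hm2 hm3 hm4 β B F hval n βi Bi Fi hvali hdisj hcover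
end
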